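/- arXiv:1303.6930 — 2 statements merged into one kernel-verified Lean document; each statement's English description precedes it below -/
import Mathlib

section
/- Let D₁ and D₂ be the open unit disc, and let E_i ⊂ D_i be the annulus {z : s < |z| < 1} for fixed 0 < s < 1. Suppose g : E₁ → E₂ is a conformal homeomorphism mapping the unit circle boundary component to the unit circle boundary component. Then g extends by Schwarz reflection across the unit circle to a conformal homeomorphism of {z : s < |z| < 1/s} onto itself, and the induced boundary map on the unit circle extends to a K-quasiconformal homeomorphism of the closed disc {|z| ≤ 1} to itself, where K depends only on s. -/
open MeasureTheory

/-- The Wirtinger derivative `∂f/∂z = (f_x - i f_y)/2` of a real-linear map `L : ℂ → ℂ`. -/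
noncomputable def wirtD (L : ℂ →L[ℝ] ℂ) : ℂ := (L 1 - Complex.I * L Complex.I) / 2

/-- The Wirtinger derivative `∂f/∂z̄ = (f_x + i f_y)/2` of a real-linear map `L : ℂ → ℂ`. -/
noncomputable def wirtDbar (L : ℂ →L[ℝ] ℂ) : ℂ := (L 1 + Complex.I * L Complex.I) / 2

/-- `f` is `K`-quasiconformal on `s`. -/
def QuasiconformalOn (K : ℝ) (f : ℂ → ℂ) (s : Set ℂ) : Prop :=
  ∃ k : ℝ, 0 ≤ k ∧ k < 1 ∧ K = (1 + k) / (1 - k) ∧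
    ∀ᵐ z ∂(volume.restrict s), ∃ L : ℂ →L[ℝ] ℂ, HasFDerivAt f L z ∧
      ‖wirtDbar L‖ ≤ k * ‖wirtD L‖

/-- The annulus `{z : s < |z| < 1}`. -/
def annE (s : ℝ) : Set ℂ := {z : ℂ | s < ‖z‖ ∧ ‖z‖ < 1}

/-- The doubled annulus `{z : s < |z| < 1/s}`. -/
def annDoubled (s : ℝ) : Set ℂ := {z : ℂ | s < ‖z‖ ∧ ‖z‖ < 1 / s}

/-!
A conformal self-map `g` of the annulus `s < |z| < 1` that keeps the unit circle is a rotation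
`z ↦ c z` with `|c| = 1`, so the rotation itself is both the reflected map and a `1`-quasiconformal
extension. Continuity of the boundary map on the unit circle gives `|g z| → 1` as `|z| → 1`. Since
`g` is proper (open mapping theorem) and collars at the inner circle are connected, a collar at
the inner circle cannot be sent to the outer end, so also `|g z| → s` as `|z| → s`. Then `|g z / z|`
and `|z / g z|` tend to `1` at both boundary circles, the maximum principle bounds both by `1`, and
a holomorphic function of constant modulus on a connected open set is constant.
-/

open Complex ComplexConjugate Set Filter Metric Topology

lemma isPreconnected_norm_preimage_Ioo {a b : ℝ} (ha : 0 ≤ a) :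
    IsPreconnected (norm ⁻¹' Ioo a b : Set ℂ) := by
  have : (norm ⁻¹' Ioo a b : Set ℂ) =
      (fun p : ℝ × ℝ => (p.1 : ℂ) * exp (p.2 * I)) '' (Ioo a b ×ˢ univ) := by
    ext z
    constructor
    · exact fun hz => ⟨(‖z‖, arg z), ⟨hz, trivial⟩, norm_mul_exp_arg_mul_I z⟩
    · rintro ⟨⟨r, θ⟩, ⟨hr, -⟩, rfl⟩
      simpa [abs_of_pos (ha.trans_lt hr.1)] using hr
  rw [this]
  exact (isPreconnected_Ioo.prod isPreconnected_univ).image _ (by fun_prop)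

lemma isCompact_norm_preimage_Icc {E : Type*} [NormedAddCommGroup E] [ProperSpace E] (r R : ℝ) :
    IsCompact (norm ⁻¹' Icc r R : Set E) :=
  (isCompact_closedBall 0 R).of_isClosed_subset (isClosed_Icc.preimage continuous_norm)
    fun _ hz => mem_closedBall_zero_iff.2 hz.2

lemma sphere_subset_closure_norm_preimage_Ioo {E : Type*} [NormedAddCommGroup E]
    [NormedSpace ℝ E] {s R : ℝ} (hR : 0 < R) (hsR : s < R) :
    sphere (0 : E) R ⊆ closure (norm ⁻¹' Ioo s R) := by
  intro p hp
  rw [mem_sphere_zero_iff_norm] at hp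
  have hlim : Tendsto (fun t : ℝ => t • p) (𝓝[<] 1) (𝓝 p) := by
    simpa using ((show Continuous fun t : ℝ => t • p by fun_prop).tendsto 1).mono_left
      nhdsWithin_le_nhds
  refine mem_closure_of_tendsto hlim ?_
  filter_upwards [Ioo_mem_nhdsLT (max_lt ((div_lt_one hR).2 hsR) one_pos)] with t ht
  have ht0 : 0 < t := (le_max_right _ _).trans_lt ht.1
  have hst : s < t * R := (div_lt_iff₀ hR).1 ((le_max_left _ _).trans_lt ht.1)
  simp only [mem_preimage, norm_smul, Real.norm_of_nonneg ht0.le, hp, mem_Ioo]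
  exact ⟨hst, mul_lt_of_lt_one_left hR ht.2⟩

lemma not_norm_preimage_Ioo_subset_of_isCompact {P : Set ℂ} (hP : IsCompact P) {a u : ℝ}
    (ha : 0 ≤ a) (hau : a < u) (hPa : ∀ z ∈ P, a < ‖z‖) : ¬ norm ⁻¹' Ioo a u ⊆ P := by
  intro hsub
  obtain ⟨a', haa', ha'P⟩ := hP.exists_forall_le' continuous_norm.continuousOn hPa
  have hw : ‖(((a + min a' u) / 2 : ℝ) : ℂ)‖ = (a + min a' u) / 2 := by
    rw [norm_real, Real.norm_eq_abs, abs_of_pos (by linarith [lt_min haa' hau])]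
  have := ha'P _ (hsub (show _ ∈ Ioo a u by
    rw [hw]; constructor <;> linarith [lt_min haa' hau, min_le_right a' u]))
  linarith [min_le_left a' u]

lemma annulus_norm_le_of_eventually_le {f : ℂ → ℂ} {a b C : ℝ}
    (hf : DifferentiableOn ℂ f (norm ⁻¹' Ioo a b))
    (ha : ∀ᶠ z in comap norm (𝓝[>] a), ‖f z‖ ≤ C)
    (hb : ∀ᶠ z in comap norm (𝓝[<] b), ‖f z‖ ≤ C)
    {z : ℂ} (hz : z ∈ norm ⁻¹' Ioo a b) : ‖f z‖ ≤ C := by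
  rw [eventually_comap] at ha hb
  obtain ⟨r₁, hr₁, har₁, hr₁z⟩ := (ha.and (Ioo_mem_nhdsGT hz.1)).exists
  obtain ⟨r₂, hr₂, hzr₂, hr₂b⟩ := (hb.and (Ioo_mem_nhdsLT hz.2)).exists
  have hr : r₁ < r₂ := hr₁z.trans hzr₂
  have hcl : closure (norm ⁻¹' Ioo r₁ r₂ : Set ℂ) ⊆ norm ⁻¹' Ioo a b := by
    refine (continuous_norm.closure_preimage_subset _).trans (preimage_mono ?_)
    rw [closure_Ioo hr.ne]
    exact Icc_subset_Ioo har₁ hr₂b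
  refine Complex.norm_le_of_forall_mem_frontier_norm_le
    (isBounded_closedBall.subset fun w hw => mem_closedBall_zero_iff.2 (le_of_lt hw.2))
    ⟨hf.mono (subset_closure.trans hcl), hf.continuousOn.mono hcl⟩ (fun w hw => ?_)
    (subset_closure ⟨hr₁z, hzr₂⟩)
  rcases (frontier_Ioo hr).subset (continuous_norm.frontier_preimage_subset _ hw) with h | h
  exacts [hr₁ w h, hr₂ w h]

lemma annulus_norm_le_of_tendsto {f : ℂ → ℂ} {a b C : ℝ}
    (hf : DifferentiableOn ℂ f (norm ⁻¹' Ioo a b))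
    (ha : Tendsto (‖f ·‖) (comap norm (𝓝[>] a)) (𝓝 C))
    (hb : Tendsto (‖f ·‖) (comap norm (𝓝[<] b)) (𝓝 C))
    {z : ℂ} (hz : z ∈ norm ⁻¹' Ioo a b) : ‖f z‖ ≤ C :=
  le_of_forall_pos_le_add fun _ hη =>
    annulus_norm_le_of_eventually_le hf
      (ha.eventually (eventually_le_nhds (lt_add_of_pos_right C hη)))
      (hb.eventually (eventually_le_nhds (lt_add_of_pos_right C hη))) hz

lemma tendsto_norm_ratio_of_tendsto_norm {f : ℂ → ℂ} {L : Filter ℂ} {r : ℝ} (hr : r ≠ 0)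
    (hz : Tendsto (‖·‖) L (𝓝 r)) (hf : Tendsto (‖f ·‖) L (𝓝 r)) :
    Tendsto (fun z => ‖f z / z‖) L (𝓝 1) ∧ Tendsto (fun z => ‖z / f z‖) L (𝓝 1) := by
  simp_rw [norm_div]
  rw [← div_self hr]
  exact ⟨hf.div hz hr, hz.div hf hr⟩

theorem exists_eq_mul_of_tendsto_norm {f : ℂ → ℂ} {a b : ℝ} (ha : 0 < a) (hab : a < b)
    (hf : DifferentiableOn ℂ f (norm ⁻¹' Ioo a b)) (hf0 : ∀ z ∈ norm ⁻¹' Ioo a b, f z ≠ 0)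
    (hfa : Tendsto (‖f ·‖) (comap norm (𝓝[>] a)) (𝓝 a))
    (hfb : Tendsto (‖f ·‖) (comap norm (𝓝[<] b)) (𝓝 b)) :
    ∃ c : ℂ, ‖c‖ = 1 ∧ ∀ z ∈ norm ⁻¹' Ioo a b, f z = c * z := by
  set A : Set ℂ := norm ⁻¹' Ioo a b
  have h0 : ∀ z ∈ A, z ≠ 0 := fun z hz => norm_pos_iff.1 (ha.trans hz.1)
  have hA := tendsto_norm_ratio_of_tendsto_norm ha.ne'
    (tendsto_comap.mono_right nhdsWithin_le_nhds) hfa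
  have hB := tendsto_norm_ratio_of_tendsto_norm (ha.trans hab).ne'
    (tendsto_comap.mono_right nhdsWithin_le_nhds) hfb
  have hnorm : ∀ z ∈ A, ‖f z / z‖ = 1 := by
    intro z hz
    have hle := annulus_norm_le_of_tendsto (f := fun z => z / f z)
      (differentiableOn_id.div hf hf0) hA.2 hB.2 hz
    rw [← inv_div, norm_inv, inv_le_one₀ (norm_pos_iff.2 (div_ne_zero (hf0 z hz) (h0 z hz)))]
      at hle
    exact le_antisymm (annulus_norm_le_of_tendsto (hf.div differentiableOn_id h0) hA.1 hB.1 hz)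
      hle
  have hz₀ : (((a + b) / 2 : ℝ) : ℂ) ∈ A := by
    simp only [A, mem_preimage, norm_real, Real.norm_eq_abs, mem_Ioo]
    rw [abs_of_pos (by linarith)]
    constructor <;> linarith
  have hconst := eqOn_of_isPreconnected_of_isMaxOn_norm (isPreconnected_norm_preimage_Ioo ha.le)
    (isOpen_Ioo.preimage continuous_norm) (hf.div differentiableOn_id h0) hz₀
    (fun z hz => (hnorm z hz).trans (hnorm _ hz₀).symm |>.le)
  refine ⟨_, hnorm _ hz₀, fun z hz => ?_⟩
  rw [← div_eq_iff (h0 z hz)]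
  exact hconst hz

lemma isCompact_inter_preimage_of_bijOn {U V K : Set ℂ} {g : ℂ → ℂ} (hU : IsOpen U)
    (hUc : IsPreconnected U) (hg : DifferentiableOn ℂ g U) (hbij : BijOn g U V)
    (hK : IsCompact K) (hKV : K ⊆ V) : IsCompact (U ∩ g ⁻¹' K) := by
  rcases (hg.analyticOnNhd hU).is_constant_or_isOpen hUc with ⟨w, hw⟩ | hopen
  · refine Subsingleton.isCompact fun x hx y hy => hbij.injOn hx.1 hy.1 ?_
    rw [hw x hx.1, hw y hy.1]
  let e := hbij.toPartialEquiv g U V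
  have hinv : ContinuousOn e.symm V := by
    refine continuousOn_iff'.2 fun t ht =>
      ⟨g '' (t ∩ U), hopen _ inter_subset_right (ht.inter hU), ?_⟩
    ext w
    constructor
    · rintro ⟨hwt, hwV⟩
      exact ⟨⟨e.symm w, ⟨hwt, e.map_target hwV⟩, e.right_inv hwV⟩, hwV⟩
    · rintro ⟨⟨z, ⟨hzt, hzU⟩, rfl⟩, hwV⟩
      exact ⟨show e.symm (e z) ∈ t by rwa [e.left_inv hzU], hwV⟩
  change IsCompact (e.source ∩ e ⁻¹' K)
  rw [← e.symm_image_eq_source_inter_preimage hKV]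
  exact hK.image_of_continuousOn (hinv.mono hKV)

lemma tendsto_norm_comap_nhdsLT_one {s : ℝ} (hs : s < 1) {f : ℂ → ℂ}
    (hf : ContinuousOn f (norm ⁻¹' Ioo s 1 ∪ sphere 0 1))
    (hS : MapsTo f (sphere 0 1) (sphere 0 1)) :
    Tendsto (‖f ·‖) (comap norm (𝓝[<] 1)) (𝓝 1) := by
  obtain ⟨r, hr, hr1⟩ := exists_between (max_lt hs one_pos)
  have hsr : s < r := (le_max_left _ _).trans_lt hr
  have hr0 : 0 < r := (le_max_right _ _).trans_lt hr
  have hK : norm ⁻¹' Icc r 1 ⊆ norm ⁻¹' Ioo s 1 ∪ sphere (0 : ℂ) 1 := fun z hz =>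
    (eq_or_lt_of_le hz.2).elim (fun h => Or.inr (mem_sphere_zero_iff_norm.2 h))
      fun h => Or.inl ⟨hsr.trans_le hz.1, h⟩
  have hunif := Metric.uniformContinuousOn_iff.1
    ((isCompact_norm_preimage_Icc r 1).uniformContinuousOn_of_continuous (hf.mono hK))
  -- compare `z` with its radial projection `z / ‖z‖` on the circle
  rw [Metric.tendsto_nhds]
  intro ε hε
  obtain ⟨δ, hδ, hfδ⟩ := hunif ε hε
  rw [eventually_comap]
  filter_upwards [Ioo_mem_nhdsLT (max_lt hr1 (sub_lt_self 1 hδ))] with t ht z rfl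
  have hrz : r < ‖z‖ := (le_max_left _ _).trans_lt ht.1
  have hz0 : ‖z‖ ≠ 0 := (hr0.trans hrz).ne'
  set p : ℂ := z / ‖z‖
  have hp : ‖p‖ = 1 := by simp [p, hz0]
  have hdist : dist z p = 1 - ‖z‖ := by
    have hzc : (‖z‖ : ℂ) ≠ 0 := mod_cast hz0
    have hzp : z - p = ((‖z‖ - 1 : ℝ) : ℂ) * p := by simp only [p]; push_cast; field_simp
    rw [dist_eq_norm, hzp, norm_mul, hp, norm_real, Real.norm_eq_abs,
      abs_of_neg (by linarith [ht.2]), mul_one, neg_sub]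
  have hfp : ‖f p‖ = 1 := mem_sphere_zero_iff_norm.1 (hS (mem_sphere_zero_iff_norm.2 hp))
  rw [Real.dist_eq, ← hfp]
  refine (abs_norm_sub_norm_le _ _).trans_lt ?_
  rw [← dist_eq_norm]
  exact hfδ z ⟨hrz.le, ht.2.le⟩ p ⟨hp ▸ hr1.le, hp.le⟩
    (by rw [hdist]; linarith [le_max_right r (1 - δ), ht.1])

lemma tendsto_norm_comap_nhdsGT_of_bijOn {a b : ℝ} (ha : 0 ≤ a) (hab : a < b) {g : ℂ → ℂ}
    (hgc : ContinuousOn g (norm ⁻¹' Ioo a b))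
    (hbij : BijOn g (norm ⁻¹' Ioo a b) (norm ⁻¹' Ioo a b))
    (hproper : ∀ K ⊆ norm ⁻¹' Ioo a b, IsCompact K → IsCompact (norm ⁻¹' Ioo a b ∩ g ⁻¹' K))
    (hb : Tendsto (‖g ·‖) (comap norm (𝓝[<] b)) (𝓝 b)) :
    Tendsto (‖g ·‖) (comap norm (𝓝[>] a)) (𝓝 a) := by
  set A : Set ℂ := norm ⁻¹' Ioo a b
  refine tendsto_order.2 ⟨fun t ht => mem_of_superset (preimage_mem_comap (Ioo_mem_nhdsGT hab))
    fun z hz => ht.trans (hbij.mapsTo hz).1, fun t ht => ?_⟩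
  obtain ⟨t', hat', ht't, ht'b⟩ : ∃ t', a < t' ∧ t' ≤ t ∧ t' < b :=
    ⟨min t ((a + b) / 2), lt_min ht (by linarith), min_le_left _ _,
      (min_le_right _ _).trans_lt (by linarith)⟩
  obtain ⟨u, ht'u, hub⟩ := exists_between ht'b
  obtain ⟨r, hrb, hr⟩ : ∃ r < b, ∀ z ∈ A, r < ‖z‖ → u < ‖g z‖ := by
    have := hb.eventually (lt_mem_nhds hub)
    rw [eventually_comap] at this
    obtain ⟨r, hrb, hr⟩ := mem_nhdsLT_iff_exists_Ioo_subset.1 this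
    exact ⟨r, hrb, fun z hz hrz => hr ⟨hrz, hz.2⟩ z rfl⟩
  -- the preimage of the ring `t' ≤ ‖w‖ ≤ u` is compact, so it avoids a collar `a < ‖z‖ < c`
  obtain ⟨a₁, ha₁, ha₁P⟩ := (hproper _ (fun w hw => ⟨hat'.trans_le hw.1, hw.2.trans_lt hub⟩)
    (isCompact_norm_preimage_Icc t' u)).exists_forall_le' continuous_norm.continuousOn
    fun z hz => hz.1.1
  set c := min a₁ b
  have hac : a < c := lt_min ha₁ hab
  have hCA : norm ⁻¹' Ioo a c ⊆ A := fun z hz => ⟨hz.1, hz.2.trans_le (min_le_right _ _)⟩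
  have hCsub : g '' (norm ⁻¹' Ioo a c) ⊆ {w | ‖w‖ < t'} ∪ {w | u < ‖w‖} := by
    rintro _ ⟨z, hz, rfl⟩
    by_contra! h
    simp only [mem_union, mem_ofPred_eq, not_or, not_lt] at h
    linarith [ha₁P z ⟨hCA hz, h⟩, hz.2, min_le_left a₁ b]
  rcases ((isPreconnected_norm_preimage_Ioo ha).image _ (hgc.mono hCA)).subset_or_subset
    (isOpen_lt continuous_norm continuous_const) (isOpen_lt continuous_const continuous_norm)
    (disjoint_left.2 fun w h₁ h₂ => by simp only [mem_ofPred_eq] at h₁ h₂; linarith) hCsub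
    with hin | hout
  · exact mem_of_superset (preimage_mem_comap (Ioo_mem_nhdsGT hac))
      fun z hz => (hin ⟨z, hz, rfl⟩).trans_le ht't
  -- otherwise both ends are pushed beyond `u`, and the thin ring `a < ‖w‖ < t'` would lie in the
  -- image of the compact middle ring `c ≤ ‖z‖ ≤ r`
  exfalso
  have hMA : norm ⁻¹' Icc c r ⊆ A := fun z hz => ⟨hac.trans_le hz.1, hz.2.trans_lt hrb⟩
  refine not_norm_preimage_Ioo_subset_of_isCompact
    ((isCompact_norm_preimage_Icc c r).image_of_continuousOn (hgc.mono hMA)) ha hat'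
    (by rintro _ ⟨z, hz, rfl⟩; exact (hbij.mapsTo (hMA hz)).1) fun w hw => ?_
  obtain ⟨z, hzA, rfl⟩ := hbij.surjOn (show w ∈ A from ⟨hw.1, hw.2.trans ht'b⟩)
  refine ⟨z, ⟨not_lt.1 fun hzc => ?_, not_lt.1 fun hrz => ?_⟩, rfl⟩
  · linarith [show u < ‖g z‖ from hout ⟨z, ⟨hzA.1, hzc⟩, rfl⟩, hw.2]
  · linarith [hr z hzA hrz, hw.2]

lemma bijOn_mul_left_norm_preimage {c : ℂ} (hc : ‖c‖ = 1) (t : Set ℝ) :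
    BijOn (c * ·) (norm ⁻¹' t) (norm ⁻¹' t) := by
  have hc0 : c ≠ 0 := norm_ne_zero_iff.1 (by rw [hc]; exact one_ne_zero)
  refine ⟨fun z hz => by simpa [hc] using hz, (mul_right_injective₀ hc0).injOn,
    fun w hw => ⟨c⁻¹ * w, by simpa [hc] using hw, by simp [hc0]⟩⟩

lemma mul_inv_conj_eq_inv_conj_mul {c : ℂ} (hc : ‖c‖ = 1) (z : ℂ) :
    c * (conj z)⁻¹ = (conj (c * z))⁻¹ := by
  rw [map_mul, mul_inv, ← inv_eq_conj hc, inv_inv]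

lemma wirtDbar_restrictScalars (L : ℂ →L[ℂ] ℂ) : wirtDbar (L.restrictScalars ℝ) = 0 := by
  have h : L I = I * L 1 := by rw [← smul_eq_mul, ← L.map_smul, smul_eq_mul, mul_one]
  simp only [wirtDbar, ContinuousLinearMap.coe_restrictScalars', h, ← mul_assoc, I_mul_I]
  ring

lemma DifferentiableOn.quasiconformalOn_one {f : ℂ → ℂ} {U : Set ℂ} (hf : DifferentiableOn ℂ f U)
    (hU : IsOpen U) : QuasiconformalOn 1 f U := by
  refine ⟨0, le_rfl, one_pos, by norm_num, ?_⟩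
  refine (ae_restrict_iff' hU.measurableSet).2 (.of_forall fun z hz => ?_)
  refine ⟨_, ((hf z hz).differentiableAt (hU.mem_nhds hz)).hasFDerivAt.restrictScalars ℝ, ?_⟩
  rw [wirtDbar_restrictScalars, norm_zero, zero_mul]

/-- A conformal homeomorphism `g` of `E = {s < |z| < 1}` onto itself sending the unit-circle
boundary component to the unit-circle boundary component (as witnessed by a continuous
extension `gext`) extends by Schwarz reflection across the unit circle to a conformal
homeomorphism `G` of `{s < |z| < 1/s}` onto itself, and the induced boundary map on the
unit circle extends to a `K`-quasiconformal homeomorphism of the closed unit disc, with `K`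
depending only on `s`. -/
theorem stmt10 (s : ℝ) (hs0 : 0 < s) (hs1 : s < 1) :
    ∃ K : ℝ, 1 ≤ K ∧
      ∀ g gext : ℂ → ℂ,
        DifferentiableOn ℂ g (annE s) → Set.BijOn g (annE s) (annE s) →
        ContinuousOn gext (annE s ∪ Metric.sphere (0 : ℂ) 1) →
        (∀ z ∈ annE s, gext z = g z) →
        Set.MapsTo gext (Metric.sphere (0 : ℂ) 1) (Metric.sphere (0 : ℂ) 1) →
        Set.SurjOn gext (Metric.sphere (0 : ℂ) 1) (Metric.sphere (0 : ℂ) 1) →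
        -- Schwarz reflection extension
        (∃ G : ℂ → ℂ, DifferentiableOn ℂ G (annDoubled s) ∧
          Set.BijOn G (annDoubled s) (annDoubled s) ∧
          (∀ z ∈ annE s, G z = g z) ∧
          (∀ z ∈ Metric.sphere (0 : ℂ) 1, G z = gext z) ∧
          (∀ z ∈ annDoubled s, G (((starRingEnd ℂ) z)⁻¹) = ((starRingEnd ℂ) (G z))⁻¹)) ∧
        -- K-quasiconformal extension of the boundary circle map to the closed disc
        (∃ F : ℂ → ℂ, ContinuousOn F (Metric.closedBall (0 : ℂ) 1) ∧
          Set.BijOn F (Metric.closedBall (0 : ℂ) 1) (Metric.closedBall (0 : ℂ) 1) ∧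
          (∀ z ∈ Metric.sphere (0 : ℂ) 1, F z = gext z) ∧
          QuasiconformalOn K F (Metric.ball (0 : ℂ) 1)) := by
  refine ⟨1, le_rfl, fun g gext hgd hgb hge hgeg hmap _ => ?_⟩
  have hout : Tendsto (‖g ·‖) (comap norm (𝓝[<] 1)) (𝓝 1) :=
    (tendsto_norm_comap_nhdsLT_one hs1 hge hmap).congr' <|
      mem_of_superset (preimage_mem_comap (Ioo_mem_nhdsLT hs1)) fun z hz =>
        congrArg norm (hgeg z hz)
  have hin := tendsto_norm_comap_nhdsGT_of_bijOn hs0.le hs1 hgd.continuousOn hgb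
    (fun K hKE hK => isCompact_inter_preimage_of_bijOn (isOpen_Ioo.preimage continuous_norm)
      (isPreconnected_norm_preimage_Ioo hs0.le) hgd hgb hK hKE) hout
  obtain ⟨c, hc, hgc⟩ := exists_eq_mul_of_tendsto_norm hs0 hs1 hgd
    (fun z hz => norm_pos_iff.1 (hs0.trans (hgb.mapsTo hz).1)) hin hout
  have hgext : ∀ z ∈ sphere (0 : ℂ) 1, c * z = gext z := fun z hz =>
    (EqOn.of_subset_closure (fun z hz => (hgc z hz).symm.trans (hgeg z hz).symm) (by fun_prop) hge
      subset_union_left (union_subset subset_closure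
        (sphere_subset_closure_norm_preimage_Ioo one_pos hs1)) (Or.inr hz))
  have hrot : Differentiable ℂ (c * ·) := differentiable_id.const_mul c
  have hclosedBall : closedBall (0 : ℂ) 1 = norm ⁻¹' Iic 1 := ext fun _ => mem_closedBall_zero_iff
  refine ⟨⟨(c * ·), hrot.differentiableOn,
      bijOn_mul_left_norm_preimage hc (Ioo s (1 / s)), fun z hz => (hgc z hz).symm, hgext,
      fun z _ => mul_inv_conj_eq_inv_conj_mul hc z⟩,
    ⟨(c * ·), hrot.continuous.continuousOn, hclosedBall ▸ bijOn_mul_left_norm_preimage hc _, hgext,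
      hrot.differentiableOn.quasiconformalOn_one isOpen_ball⟩⟩
end

section
/- Let T be a finite triangulation of a disc and P a circle packing of T in the hyperbolic plane realizing a packing label (an assignment of hyperbolic radii to vertices) in which every interior vertex has angle sum exactly 2π. Then the angle sum condition determines the label: if two packing labels with the same boundary radii both have angle sum 2π at every interior vertex, they are equal. -/
/-!
Scaling all three radii of a triangle of tangent circles by `t > 1` strictly shrinks its angles,
because `s ↦ sinh (t * s) / sinh s` is increasing, while enlarging a neighbour's radius enlarges
the angle. If `r₁ ≰ r₂`, let `t > 1` be the maximum of `r₁ / r₂`, attained at `v`. Since the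
labels agree on the boundary, `v` is interior, and comparing `r₁ ≤ t • r₂` (with equality at `v`)
termwise shows that the angle sum of `r₁` at `v` is strictly smaller than that of `r₂`.
-/

open Real

/-- The angle at the vertex of radius `x` in the hyperbolic triangle formed by three
mutually tangent circles of radii `x`, `y`, `z` (side lengths `x+y`, `x+z`, `y+z`),
computed by the hyperbolic law of cosines. -/
noncomputable def hAngle (x y z : ℝ) : ℝ :=
  Real.arccos ((Real.cosh (x + y) * Real.cosh (x + z) - Real.cosh (y + z)) /
    (Real.sinh (x + y) * Real.sinh (x + z)))

/-- The angle sum at a vertex `v` with label `r` over its cyclically ordered flower `l`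
of neighbours. -/
noncomputable def angleSum {V : Type*} (r : V → ℝ) (v : V) (l : List V) : ℝ :=
  ((l.zip (l.rotate 1)).map (fun p => hAngle (r v) (r p.1) (r p.2))).sum

namespace Real

lemma sinh_lt_mul_cosh {x : ℝ} (hx : 0 < x) : sinh x < x * cosh x := by
  have hmono : StrictMonoOn (fun y => y * cosh y - sinh y) (Set.Ici 0) := by
    refine strictMonoOn_of_deriv_pos (convex_Ici 0) (by fun_prop) fun y hy => ?_
    rw [interior_Ici] at hy
    have hderiv : HasDerivAt (fun y => y * cosh y - sinh y) (y * sinh y) y :=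
      (((hasDerivAt_id' y).mul (hasDerivAt_cosh y)).sub (hasDerivAt_sinh y)).congr_deriv
        (by ring)
    rw [hderiv.deriv]
    exact mul_pos hy (sinh_pos_iff.mpr hy)
  simpa using hmono Set.self_mem_Ici hx.le hx

lemma strictMonoOn_sinh_div_self : StrictMonoOn (fun x => sinh x / x) (Set.Ioi 0) := by
  refine strictMonoOn_of_deriv_pos (convex_Ioi 0)
    (continuous_sinh.continuousOn.div continuousOn_id fun y hy => hy.ne') fun y hy => ?_
  rw [interior_Ioi] at hy
  have hderiv : HasDerivAt (fun x => sinh x / x) ((cosh y * y - sinh y * 1) / y ^ 2) y :=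
    (hasDerivAt_sinh y).div (hasDerivAt_id y) hy.ne'
  rw [hderiv.deriv]
  have := sinh_lt_mul_cosh hy
  exact div_pos (by linarith) (pow_pos hy 2)

lemma strictMonoOn_sinh_mul_div_sinh {t : ℝ} (ht : 1 < t) :
    StrictMonoOn (fun s => sinh (t * s) / sinh s) (Set.Ioi 0) := by
  refine strictMonoOn_of_deriv_pos (convex_Ioi 0)
    ((continuous_sinh.comp (continuous_const_mul t)).continuousOn.div continuous_sinh.continuousOn
      fun y hy => (sinh_pos_iff.mpr hy).ne') fun y hy => ?_
  rw [interior_Ioi] at hy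
  have hy : 0 < y := hy
  have hnum : HasDerivAt (fun s => sinh (t * s)) (cosh (t * y) * t) y := by
    simpa using ((hasDerivAt_id' y).const_mul t).sinh
  have hderiv : HasDerivAt (fun s => sinh (t * s) / sinh s)
      ((cosh (t * y) * t * sinh y - sinh (t * y) * cosh y) / sinh y ^ 2) y :=
    hnum.div (hasDerivAt_sinh y) (sinh_pos_iff.mpr hy).ne'
  rw [hderiv.deriv]
  refine div_pos ?_ (pow_pos (sinh_pos_iff.mpr hy) 2)
  -- `sinh u / u` increases from `u = (t - 1) y` to `u = (t + 1) y`; expand both sides.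
  have hlt := strictMonoOn_sinh_div_self (a := (t - 1) * y) (b := (t + 1) * y)
    (by simp only [Set.mem_Ioi]; nlinarith) (by simp only [Set.mem_Ioi]; nlinarith)
    (by nlinarith)
  simp only at hlt
  rw [div_lt_div_iff₀ (by nlinarith) (by nlinarith), sub_mul, add_mul, one_mul, sinh_sub,
    sinh_add] at hlt
  nlinarith

lemma sinh_mul_div_sinh_mul_lt {t a b : ℝ} (ht : 1 < t) (ha : 0 < a) (hab : a < b) :
    sinh (t * a) / sinh (t * b) < sinh a / sinh b := by
  have hb := ha.trans hab
  have ht0 : 0 < t := zero_lt_one.trans ht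
  have h := strictMonoOn_sinh_mul_div_sinh ht ha hb hab
  rw [div_lt_div_iff₀ (sinh_pos_iff.mpr ha) (sinh_pos_iff.mpr hb)] at h
  rw [div_lt_div_iff₀ (sinh_pos_iff.mpr (by positivity)) (sinh_pos_iff.mpr (by positivity))]
  linarith

lemma strictMonoOn_arccos_one_sub_two_mul :
    StrictMonoOn (fun a => arccos (1 - 2 * a)) (Set.Icc 0 1) := by
  intro a ha b hb hab
  simp only [Set.mem_Icc] at ha hb
  exact strictAntiOn_arccos ⟨by linarith, by linarith⟩ ⟨by linarith, by linarith⟩ (by linarith)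

end Real

noncomputable def hAngleHalfSinSq (x y z : ℝ) : ℝ :=
  sinh y * sinh z / (sinh (x + y) * sinh (x + z))

lemma hAngle_eq_arccos {x y z : ℝ} (hxy : x + y ≠ 0) (hxz : x + z ≠ 0) :
    hAngle x y z = arccos (1 - 2 * hAngleHalfSinSq x y z) := by
  have hsxy : sinh (x + y) ≠ 0 := sinh_ne_zero.mpr hxy
  have hsxz : sinh (x + z) ≠ 0 := sinh_ne_zero.mpr hxz
  rw [hAngle, hAngleHalfSinSq]
  congr 1
  field_simp
  rw [cosh_add x y, cosh_add x z, sinh_add x y, sinh_add x z, cosh_add y z]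
  linear_combination (cosh y * cosh z - sinh y * sinh z) * cosh_sq_sub_sinh_sq x

lemma hAngle_comm (x y z : ℝ) : hAngle x y z = hAngle x z y := by
  rw [hAngle, hAngle, add_comm y z, mul_comm (cosh (x + y)), mul_comm (sinh (x + y))]

lemma hAngleHalfSinSq_eq_mul (x y z : ℝ) :
    hAngleHalfSinSq x y z = sinh y / sinh (x + y) * (sinh z / sinh (x + z)) :=
  mul_div_mul_comm _ _ _ _

lemma sinh_div_sinh_add_lt_one {x y : ℝ} (hx : 0 < x) (hy : 0 ≤ y) :
    sinh y / sinh (x + y) < 1 :=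
  (div_lt_one (sinh_pos_iff.mpr (by linarith))).mpr (sinh_lt_sinh.mpr (by linarith))

lemma hAngleHalfSinSq_mem_Icc {x y z : ℝ} (hx : 0 < x) (hy : 0 ≤ y) (hz : 0 ≤ z) :
    hAngleHalfSinSq x y z ∈ Set.Icc 0 1 := by
  have hy' : 0 ≤ sinh y / sinh (x + y) :=
    div_nonneg (sinh_nonneg_iff.mpr hy) (sinh_pos_iff.mpr (by linarith)).le
  have hz' : 0 ≤ sinh z / sinh (x + z) :=
    div_nonneg (sinh_nonneg_iff.mpr hz) (sinh_pos_iff.mpr (by linarith)).le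
  rw [hAngleHalfSinSq_eq_mul]
  exact ⟨mul_nonneg hy' hz', mul_le_one₀ (sinh_div_sinh_add_lt_one hx hy).le hz'
    (sinh_div_sinh_add_lt_one hx hz).le⟩

lemma sinh_div_sinh_add_le {x y y' : ℝ} (hx : 0 < x) (hy : 0 ≤ y) (h : y ≤ y') :
    sinh y / sinh (x + y) ≤ sinh y' / sinh (x + y') := by
  rw [div_le_div_iff₀ (sinh_pos_iff.mpr (by linarith)) (sinh_pos_iff.mpr (by linarith))]
  have hexpand : sinh y * sinh (x + y') - sinh y' * sinh (x + y) = sinh x * sinh (y - y') := by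
    rw [sinh_add, sinh_add, sinh_sub]
    ring
  nlinarith [mul_nonpos_of_nonneg_of_nonpos (sinh_pos_iff.mpr hx).le
    (sinh_nonpos_iff.mpr (sub_nonpos.mpr h))]

lemma hAngle_le_hAngle_of_le {x y z y' : ℝ} (hx : 0 < x) (hy : 0 ≤ y) (hz : 0 ≤ z)
    (h : y ≤ y') : hAngle x y z ≤ hAngle x y' z := by
  have hy' := hy.trans h
  rw [hAngle_eq_arccos (by linarith) (by linarith), hAngle_eq_arccos (by linarith) (by linarith)]
  refine strictMonoOn_arccos_one_sub_two_mul.monotoneOn (hAngleHalfSinSq_mem_Icc hx hy hz)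
    (hAngleHalfSinSq_mem_Icc hx hy' hz) ?_
  rw [hAngleHalfSinSq_eq_mul, hAngleHalfSinSq_eq_mul]
  exact mul_le_mul_of_nonneg_right (sinh_div_sinh_add_le hx hy h)
    (div_nonneg (sinh_nonneg_iff.mpr hz) (sinh_pos_iff.mpr (by linarith)).le)

lemma hAngle_mul_lt {x y z t : ℝ} (hx : 0 < x) (hy : 0 < y) (hz : 0 < z) (ht : 1 < t) :
    hAngle (t * x) (t * y) (t * z) < hAngle x y z := by
  have ht0 : 0 < t := zero_lt_one.trans ht
  rw [hAngle_eq_arccos (by positivity) (by positivity), hAngle_eq_arccos (by positivity)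
    (by positivity)]
  refine strictMonoOn_arccos_one_sub_two_mul
    (hAngleHalfSinSq_mem_Icc (by positivity) (by positivity) (by positivity))
    (hAngleHalfSinSq_mem_Icc hx hy.le hz.le) ?_
  rw [hAngleHalfSinSq_eq_mul, hAngleHalfSinSq_eq_mul, ← mul_add, ← mul_add]
  exact mul_lt_mul'' (sinh_mul_div_sinh_mul_lt ht hy (by linarith))
    (sinh_mul_div_sinh_mul_lt ht hz (by linarith))
    (div_nonneg (sinh_pos_iff.mpr (by positivity)).le (sinh_pos_iff.mpr (by positivity)).le)
    (div_nonneg (sinh_pos_iff.mpr (by positivity)).le (sinh_pos_iff.mpr (by positivity)).le)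

lemma hAngle_mul_lt_of_le_mul {x y z y' z' t : ℝ} (hx : 0 < x) (hy : 0 < y) (hz : 0 < z)
    (hy' : 0 < y') (hz' : 0 < z') (ht : 1 < t) (h₁ : y' ≤ t * y) (h₂ : z' ≤ t * z) :
    hAngle (t * x) y' z' < hAngle x y z := by
  have ht0 : 0 < t := zero_lt_one.trans ht
  calc hAngle (t * x) y' z'
      ≤ hAngle (t * x) (t * y) z' := hAngle_le_hAngle_of_le (by positivity) hy'.le hz'.le h₁
    _ = hAngle (t * x) z' (t * y) := hAngle_comm _ _ _
    _ ≤ hAngle (t * x) (t * z) (t * y) :=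
        hAngle_le_hAngle_of_le (by positivity) hz'.le (by positivity) h₂
    _ = hAngle (t * x) (t * y) (t * z) := hAngle_comm _ _ _
    _ < hAngle x y z := hAngle_mul_lt hx hy hz ht

lemma angleSum_lt_angleSum_of_le_mul {V : Type*} {r₁ r₂ : V → ℝ} {v : V} {l : List V} {t : ℝ}
    (hl : l ≠ []) (h₁pos : ∀ u, 0 < r₁ u) (h₂pos : ∀ u, 0 < r₂ u) (ht : 1 < t)
    (hv : r₁ v = t * r₂ v) (hle : ∀ u, r₁ u ≤ t * r₂ u) :
    angleSum r₁ v l < angleSum r₂ v l := by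
  have hzip : l.zip (l.rotate 1) ≠ [] := by
    apply List.ne_nil_of_length_pos
    simpa [List.length_zip, List.length_rotate] using List.length_pos_of_ne_nil hl
  refine List.sum_lt_sum_of_ne_nil hzip _ _ fun p _ => ?_
  rw [hv]
  exact hAngle_mul_lt_of_le_mul (h₂pos v) (h₂pos p.1) (h₂pos p.2) (h₁pos p.1) (h₁pos p.2) ht
    (hle p.1) (hle p.2)

theorem packingLabel_le_of_angleSum_le {V : Type*} [Finite V] {flower : V → List V}
    {interior : Set V} (hne : ∀ v ∈ interior, flower v ≠ []) {r₁ r₂ : V → ℝ}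
    (h₁pos : ∀ v, 0 < r₁ v) (h₂pos : ∀ v, 0 < r₂ v) (hbd : ∀ v ∉ interior, r₁ v ≤ r₂ v)
    (hsum : ∀ v ∈ interior, angleSum r₂ v (flower v) ≤ angleSum r₁ v (flower v)) :
    r₁ ≤ r₂ := by
  intro w
  by_contra! hw
  have : Nonempty V := ⟨w⟩
  obtain ⟨v, hv⟩ := Finite.exists_max fun u => r₁ u / r₂ u
  set t := r₁ v / r₂ v
  have ht : 1 < t := ((one_lt_div (h₂pos w)).mpr hw).trans_le (hv w)
  have hvt : r₁ v = t * r₂ v := (div_mul_cancel₀ _ (h₂pos v).ne').symm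
  have hle : ∀ u, r₁ u ≤ t * r₂ u := fun u => (div_le_iff₀ (h₂pos u)).mp (hv u)
  have hv_int : v ∈ interior := by
    by_contra hv_bd
    exact ht.not_ge ((div_le_one (h₂pos v)).mpr (hbd v hv_bd))
  exact (hsum v hv_int).not_gt
    (angleSum_lt_angleSum_of_le_mul (hne v hv_int) h₁pos h₂pos ht hvt hle)

theorem stmt16_general {V : Type*} [Fintype V]
    (flower : V → List V) (interior : Finset V)
    (hdeg : ∀ v ∈ interior, 3 ≤ (flower v).length)
    (r₁ r₂ : V → ℝ) (h₁pos : ∀ v, 0 < r₁ v) (h₂pos : ∀ v, 0 < r₂ v)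
    -- the labels have the same boundary radii
    (hbd : ∀ v ∉ interior, r₁ v = r₂ v)
    -- both labels have angle sum 2π at every interior vertex
    (hsum₁ : ∀ v ∈ interior, angleSum r₁ v (flower v) = 2 * π)
    (hsum₂ : ∀ v ∈ interior, angleSum r₂ v (flower v) = 2 * π) :
    r₁ = r₂ := by
  have hne : ∀ v ∈ interior, flower v ≠ [] := fun v hv =>
    List.ne_nil_of_length_pos (by linarith [hdeg v hv])
  exact le_antisymm
    (packingLabel_le_of_angleSum_le hne h₁pos h₂pos (fun v hv => (hbd v hv).le)
      fun v hv => by rw [hsum₁ v hv, hsum₂ v hv])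
    (packingLabel_le_of_angleSum_le hne h₂pos h₁pos (fun v hv => (hbd v hv).ge)
      fun v hv => by rw [hsum₁ v hv, hsum₂ v hv])

/-- Uniqueness of hyperbolic packing labels for a finite triangulation of a disc:
if two positive packing labels agree at the boundary vertices and both have angle sum
exactly `2π` at every interior vertex, then they are equal. -/
theorem stmt16 {V : Type*} [Fintype V] [DecidableEq V]
    (flower : V → List V) (interior : Finset V)
    -- there is at least one boundary vertex
    (hbdry : interior ≠ Finset.univ)
    -- combinatorial sanity: flowers of interior vertices have length ≥ 3 and adjacency is
    -- symmetric
    (hdeg : ∀ v ∈ interior, 3 ≤ (flower v).length)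
    (hsym : ∀ v ∈ interior, ∀ u, u ∈ flower v → v ∈ flower u)
    -- connectivity: every nonempty set of interior vertices has a neighbour outside it
    (hconn : ∀ S : Finset V, S ⊆ interior → S.Nonempty →
      ∃ v ∈ S, ∃ u, u ∈ flower v ∧ u ∉ S)
    (r₁ r₂ : V → ℝ) (h₁pos : ∀ v, 0 < r₁ v) (h₂pos : ∀ v, 0 < r₂ v)
    -- the labels have the same boundary radii
    (hbd : ∀ v ∉ interior, r₁ v = r₂ v)
    -- both labels have angle sum 2π at every interior vertex
    (hsum₁ : ∀ v ∈ interior, angleSum r₁ v (flower v) = 2 * π)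
    (hsum₂ : ∀ v ∈ interior, angleSum r₂ v (flower v) = 2 * π) :
    r₁ = r₂ :=
  stmt16_general flower interior hdeg r₁ r₂ h₁pos h₂pos hbd hsum₁ hsum₂
end
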